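/- arXiv:1611.05600 — 4 statements merged into one kernel-verified Lean document; each statement's English description precedes it below -/
import Mathlib

section
/- The functions e^1_{k,n}(x,y) = √(n!/(n-k)!) B^{(k+1)/2} exp(-B(x²+y²)/2)(x+iy)^k L_n^{(k)}(B(x²+y²)), for fixed n and 0 ≤ k ≤ n, belong to L^2(ℝ^2) and are pairwise orthogonal in L^2(ℝ^2). -/
open MeasureTheory

/-- The Laguerre polynomial `L_n^{(α)}(t) = Σ_{k=0}^n (-1)^k C(n+α, n-k) t^k / k!`. -/
noncomputable def laguerre (n α : ℕ) (t : ℝ) : ℝ :=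
  ∑ k ∈ Finset.range (n + 1),
    (-1 : ℝ) ^ k * ((n + α).choose (n - k) : ℝ) * t ^ k / (Nat.factorial k : ℝ)

/-- The eigenfunction
`e^1_{k,n}(x,y) = √(n!/(n-k)!) B^{(k+1)/2} e^{-B(x²+y²)/2} (x+iy)^k L_n^{(k)}(B(x²+y²))`. -/
noncomputable def e1 (B : ℝ) (n k : ℕ) (p : ℝ × ℝ) : ℂ :=
  ((Real.sqrt ((n.factorial : ℝ) / ((n - k).factorial : ℝ)) *
      B ^ (((k : ℝ) + 1) / 2) : ℝ) : ℂ) *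
    Complex.exp (-(((B * (p.1 ^ 2 + p.2 ^ 2)) : ℝ) : ℂ) / 2) *
    ((p.1 : ℂ) + Complex.I * (p.2 : ℂ)) ^ k *
    ((laguerre n k (B * (p.1 ^ 2 + p.2 ^ 2)) : ℝ) : ℂ)

/-!
In polar coordinates `e^1_{k,n}` is a radial function times `e^{ikθ}`, so the integrand
`e^1_{k,n} · conj e^1_{k',n}` factors into a radial part and `e^{i(k-k')θ}`, whose integral over
`(-π, π)` vanishes for `k ≠ k'`. Square integrability follows from bounding `|e^1_{k,n}|` by a
polynomial in `x² + y²` times `e^{-B(x² + y²)/2}`, which is dominated by a product of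
one-variable functions `(1 + x²)^N e^{-bx²}`.
-/

open Real Complex ComplexConjugate

theorem integrable_one_add_sq_pow_mul_exp_neg_mul_sq {b : ℝ} (hb : 0 < b) (N : ℕ) :
    Integrable fun x : ℝ => (1 + x ^ 2) ^ N * rexp (-b * x ^ 2) := by
  have hexpand : (fun x : ℝ => (1 + x ^ 2) ^ N * rexp (-b * x ^ 2)) = fun x =>
      ∑ j ∈ Finset.range (N + 1), (N.choose j : ℝ) * (x ^ (2 * j) * rexp (-b * x ^ 2)) := by
    funext x
    rw [add_comm, add_pow, Finset.sum_mul]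
    refine Finset.sum_congr rfl fun j _ => ?_
    rw [pow_mul]; ring
  rw [hexpand]
  refine integrable_finsetSum _ fun j _ => Integrable.const_mul ?_ _
  have h := integrable_rpow_mul_exp_neg_mul_sq hb (s := ((2 * j : ℕ) : ℝ))
    (neg_one_lt_zero.trans_le (Nat.cast_nonneg _))
  simpa only [Real.rpow_natCast, neg_mul] using h

theorem integrable_one_add_sq_add_sq_pow_mul_exp {b : ℝ} (hb : 0 < b) (N : ℕ) :
    Integrable fun p : ℝ × ℝ =>
      (1 + (p.1 ^ 2 + p.2 ^ 2)) ^ N * rexp (-b * (p.1 ^ 2 + p.2 ^ 2)) := by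
  have hprod := (integrable_one_add_sq_pow_mul_exp_neg_mul_sq hb N).mul_prod
    (integrable_one_add_sq_pow_mul_exp_neg_mul_sq hb N)
  rw [← Measure.volume_eq_prod] at hprod
  refine hprod.mono' (by fun_prop) (Filter.Eventually.of_forall fun p => ?_)
  have hle : 1 + (p.1 ^ 2 + p.2 ^ 2) ≤ (1 + p.1 ^ 2) * (1 + p.2 ^ 2) := by
    nlinarith [mul_nonneg (sq_nonneg p.1) (sq_nonneg p.2)]
  rw [Real.norm_of_nonneg (by positivity), mul_add, Real.exp_add]
  calc (1 + (p.1 ^ 2 + p.2 ^ 2)) ^ N * (rexp (-b * p.1 ^ 2) * rexp (-b * p.2 ^ 2))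
      ≤ ((1 + p.1 ^ 2) * (1 + p.2 ^ 2)) ^ N * (rexp (-b * p.1 ^ 2) * rexp (-b * p.2 ^ 2)) := by
        gcongr
    _ = _ := by rw [mul_pow]; ring

theorem memLp_two_of_norm_le {E : Type*} [NormedAddCommGroup E] {f : ℝ × ℝ → E}
    (hf : AEStronglyMeasurable f) {b C : ℝ} (hb : 0 < b) (N : ℕ)
    (hle : ∀ p : ℝ × ℝ,
      ‖f p‖ ≤ C * (1 + (p.1 ^ 2 + p.2 ^ 2)) ^ N * rexp (-b * (p.1 ^ 2 + p.2 ^ 2))) :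
    MemLp f 2 := by
  rw [memLp_two_iff_integrable_sq_norm hf]
  refine ((integrable_one_add_sq_add_sq_pow_mul_exp (mul_pos two_pos hb) (2 * N)).const_mul
    (C ^ 2)).mono' (hf.norm.pow 2) (Filter.Eventually.of_forall fun p => ?_)
  rw [Real.norm_of_nonneg (by positivity)]
  have hexp : rexp (-(2 * b) * (p.1 ^ 2 + p.2 ^ 2)) = rexp (-b * (p.1 ^ 2 + p.2 ^ 2)) ^ 2 := by
    rw [← Real.exp_nat_mul]; push_cast; ring_nf
  calc ‖f p‖ ^ 2
      ≤ (C * (1 + (p.1 ^ 2 + p.2 ^ 2)) ^ N * rexp (-b * (p.1 ^ 2 + p.2 ^ 2))) ^ 2 :=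
        pow_le_pow_left₀ (norm_nonneg _) (hle p) 2
    _ = _ := by rw [hexp, pow_mul']; ring

/-- `g(x² + y²) (x + i y)^k`: a radial profile times a function of angular momentum `k`. -/
noncomputable def radialMulPow (g : ℝ → ℂ) (k : ℕ) (p : ℝ × ℝ) : ℂ :=
  g (p.1 ^ 2 + p.2 ^ 2) * ((p.1 : ℂ) + I * p.2) ^ k

theorem norm_add_I_mul_le (x y : ℝ) : ‖(x : ℂ) + I * y‖ ≤ 1 + (x ^ 2 + y ^ 2) := by
  have hsq : ‖(x : ℂ) + I * y‖ ^ 2 = x ^ 2 + y ^ 2 := by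
    rw [Complex.sq_norm, normSq_apply]
    simp only [add_re, ofReal_re, mul_re, I_re, zero_mul, I_im, ofReal_im, mul_zero, sub_self,
      add_zero, add_im, mul_im, one_mul, zero_add]
    ring
  nlinarith [sq_nonneg (‖(x : ℂ) + I * y‖ - 1)]

theorem memLp_radialMulPow {g : ℝ → ℂ} (hg : Continuous g) {b C : ℝ} (hb : 0 < b)
    (N k : ℕ) (hle : ∀ s, 0 ≤ s → ‖g s‖ ≤ C * (1 + s) ^ N * rexp (-b * s)) :
    MemLp (radialMulPow g k) 2 := by
  have hcont : Continuous (radialMulPow g k) := by unfold radialMulPow; fun_prop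
  refine memLp_two_of_norm_le hcont.aestronglyMeasurable (C := C) hb (N + k) fun p => ?_
  have hs : 0 ≤ p.1 ^ 2 + p.2 ^ 2 := by positivity
  rw [radialMulPow, norm_mul, norm_pow, pow_add]
  calc ‖g (p.1 ^ 2 + p.2 ^ 2)‖ * ‖(p.1 : ℂ) + I * p.2‖ ^ k
      ≤ (C * (1 + (p.1 ^ 2 + p.2 ^ 2)) ^ N * rexp (-b * (p.1 ^ 2 + p.2 ^ 2))) *
          (1 + (p.1 ^ 2 + p.2 ^ 2)) ^ k :=
        mul_le_mul (hle _ hs) (pow_le_pow_left₀ (norm_nonneg _) (norm_add_I_mul_le _ _) k)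
          (by positivity) ((norm_nonneg _).trans (hle _ hs))
    _ = _ := by ring

theorem integral_exp_int_mul_mul_I_eq_zero {m : ℤ} (hm : m ≠ 0) :
    ∫ θ in -π..π, cexp (m * I * θ) = 0 := by
  have hmI : (m : ℂ) * I ≠ 0 := mul_ne_zero (Int.cast_ne_zero.mpr hm) I_ne_zero
  have hperiod : cexp (m * I * π) = cexp (m * I * (-π : ℝ)) := by
    rw [← mul_one (cexp (m * I * (-π : ℝ))), ← exp_int_mul_two_pi_mul_I m, ← Complex.exp_add]
    push_cast; ring_nf
  rw [integral_exp_mul_complex hmI, hperiod, sub_self, zero_div]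

theorem radialMulPow_polarCoord_symm (g : ℝ → ℂ) (k : ℕ) (q : ℝ × ℝ) :
    radialMulPow g k (polarCoord.symm q) = g (q.1 ^ 2) * q.1 ^ k * cexp (k * I * q.2) := by
  obtain ⟨r, θ⟩ := q
  have hsq : (r * Real.cos θ) ^ 2 + (r * Real.sin θ) ^ 2 = r ^ 2 := by
    linear_combination r ^ 2 * Real.sin_sq_add_cos_sq θ
  have hpolar :
      ((r * Real.cos θ : ℝ) : ℂ) + I * ((r * Real.sin θ : ℝ) : ℂ) = r * cexp (θ * I) := by
    rw [exp_mul_I, ← ofReal_cos, ← ofReal_sin]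
    push_cast; ring
  rw [radialMulPow, polarCoord_symm_apply, hsq, hpolar, mul_pow, ← Complex.exp_nat_mul]
  ring_nf

theorem integral_radialMulPow_mul_conj_eq_zero (g h : ℝ → ℂ) {k k' : ℕ} (hkk' : k ≠ k') :
    ∫ p : ℝ × ℝ, radialMulPow g k p * conj (radialMulPow h k' p) = 0 := by
  set F : ℝ → ℂ := fun r => r * g (r ^ 2) * conj (h (r ^ 2)) * r ^ (k + k')
  set G : ℝ → ℂ := fun θ => cexp (((k - k' : ℤ) : ℂ) * I * θ)
  have hsplit : ∀ q : ℝ × ℝ, q.1 • (radialMulPow g k (polarCoord.symm q) *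
      conj (radialMulPow h k' (polarCoord.symm q))) = F q.1 * G q.2 := by
    intro q
    rw [radialMulPow_polarCoord_symm, radialMulPow_polarCoord_symm, map_mul, ← exp_conj]
    simp only [map_mul, map_pow, map_natCast, conj_ofReal, conj_I, real_smul, F, G]
    rw [pow_add, mul_comm (conj (h _)), show ((k - k' : ℤ) : ℂ) * I * q.2 =
      k * I * q.2 + k' * -I * q.2 by push_cast; ring, Complex.exp_add]
    ring
  rw [← integral_comp_polarCoord_symm, funext hsplit, polarCoord_target, Measure.volume_eq_prod,
    ← Measure.prod_restrict, integral_prod_mul F G, ← integral_Ioc_eq_integral_Ioo,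
    ← intervalIntegral.integral_of_le (by linarith [pi_pos]),
    integral_exp_int_mul_mul_I_eq_zero (sub_ne_zero.mpr (Int.ofNat_inj.not.mpr hkk')), mul_zero]

@[fun_prop]
theorem continuous_laguerre (n α : ℕ) : Continuous (laguerre n α) := by
  unfold laguerre; fun_prop

theorem abs_laguerre_le (n α : ℕ) :
    ∃ A, 0 ≤ A ∧ ∀ t, 0 ≤ t → |laguerre n α t| ≤ A * (1 + t) ^ n := by
  refine ⟨∑ j ∈ Finset.range (n + 1), ((n + α).choose (n - j) : ℝ) / j.factorial,
    by positivity, fun t ht => ?_⟩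
  rw [laguerre, Finset.sum_mul]
  refine (Finset.abs_sum_le_sum_abs _ _).trans (Finset.sum_le_sum fun j hj => ?_)
  have htj : t ^ j ≤ (1 + t) ^ n := calc
    t ^ j ≤ (1 + t) ^ j := by gcongr; linarith
    _ ≤ (1 + t) ^ n := pow_le_pow_right₀ (by linarith) (Finset.mem_range_succ_iff.mp hj)
  rw [abs_div, abs_mul, abs_mul, abs_pow, abs_neg, abs_one, one_pow, one_mul, Nat.abs_cast,
    abs_of_nonneg (pow_nonneg ht j), Nat.abs_cast, div_mul_eq_mul_div]
  gcongr

noncomputable def e1Radial (B : ℝ) (n k : ℕ) (s : ℝ) : ℝ :=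
  Real.sqrt ((n.factorial : ℝ) / ((n - k).factorial : ℝ)) * B ^ (((k : ℝ) + 1) / 2) *
    rexp (-(B * s) / 2) * laguerre n k (B * s)

theorem e1_eq_radialMulPow (B : ℝ) (n k : ℕ) :
    e1 B n k = radialMulPow (fun s => (e1Radial B n k s : ℂ)) k := by
  funext p
  simp only [e1, radialMulPow, e1Radial, ofReal_mul, ofReal_exp, ofReal_div, ofReal_neg]
  push_cast
  ring

theorem abs_e1Radial_le {B : ℝ} (hB : 0 ≤ B) (n k : ℕ) :
    ∃ C, ∀ s, 0 ≤ s → |e1Radial B n k s| ≤ C * (1 + s) ^ n * rexp (-(B / 2) * s) := by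
  obtain ⟨A, hA, hL⟩ := abs_laguerre_le n k
  set c := Real.sqrt ((n.factorial : ℝ) / ((n - k).factorial : ℝ)) * B ^ (((k : ℝ) + 1) / 2)
  have hc : 0 ≤ c := by positivity
  refine ⟨c * A * (1 + B) ^ n, fun s hs => ?_⟩
  have hBs : 1 + B * s ≤ (1 + B) * (1 + s) := by nlinarith [mul_nonneg hB hs]
  rw [e1Radial, abs_mul, abs_mul, abs_of_nonneg hc, abs_of_pos (Real.exp_pos _),
    show -(B * s) / 2 = -(B / 2) * s by ring]
  calc c * rexp (-(B / 2) * s) * |laguerre n k (B * s)|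
      ≤ c * rexp (-(B / 2) * s) * (A * ((1 + B) * (1 + s)) ^ n) := by
        gcongr
        exact (hL _ (mul_nonneg hB hs)).trans (by gcongr)
    _ = _ := by rw [mul_pow]; ring

/-- For fixed `n` and `0 ≤ k ≤ n`, the functions `e^1_{k,n}` belong to `L²(ℝ²)` and are
pairwise orthogonal there. -/
theorem e1_memL2_orthogonal (B : ℝ) (hB : 0 < B) (n : ℕ) :
    (∀ k ≤ n, MemLp (e1 B n k) 2 volume) ∧
    (∀ k ≤ n, ∀ k' ≤ n, k ≠ k' →
      ∫ p : ℝ × ℝ, e1 B n k p * (starRingEnd ℂ) (e1 B n k' p) = 0) := by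
  refine ⟨fun k _ => ?_, fun k _ k' _ hkk' => ?_⟩
  · obtain ⟨C, hC⟩ := abs_e1Radial_le hB.le n k
    rw [e1_eq_radialMulPow]
    exact memLp_radialMulPow (by unfold e1Radial; fun_prop) (half_pos hB) n k fun s hs => by
      simpa only [norm_real, Real.norm_eq_abs] using hC s hs
  · simp only [e1_eq_radialMulPow]
    exact integral_radialMulPow_mul_conj_eq_zero _ _ hkk'
end

section
/- Consider the inhomogeneous scalar ODE v'' + a(t)(q(t) + ν²)v = g(t) on [0,T], with a, q Lipschitz, a(t) ≥ a₀ > 0, q(t) ≥ 0, ν ≥ ν₀ > 0, and g continuous. Then there exists C > 0 independent of ν and g such that ν²|v(t)|² + |v'(t)|² ≤ C(ν²|v(0)|² + |v'(0)|² + sup_{0≤s≤T}|g(s)|²) for all t ∈ [0,T]. -/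
/-!
For `φ = a (q + ν²)` the terms `2 φ ⟪v, v'⟫` cancel in the derivative of the weighted energy
`E = φ ‖v‖² + ‖v'‖²`, leaving `φ' ‖v‖² + 2 ⟪v', g⟫`. As `φ` is only Lipschitz, `φ'` is replaced by
its Lipschitz constant `L` in a right Dini derivative bound, and Grönwall's inequality in its
liminf form applies. Uniformity in `ν` comes from `L = O(ν²)` against `φ ≥ a₀ ν²`, so that
`L ‖v‖² ≤ κ φ ‖v‖²` with `κ` independent of `ν`; the same comparison `φ ≍ ν²` turns `E` back
into `ν² ‖v‖² + ‖v'‖²`.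
-/

open Set Filter Topology
open scoped NNReal RealInnerProductSpace

theorem LipschitzOnWith.mul_of_norm_le {α R : Type*} [PseudoMetricSpace α] [SeminormedRing R]
    {f g : α → R} {s : Set α} {Kf Kg A B : ℝ≥0}
    (hf : LipschitzOnWith Kf f s) (hg : LipschitzOnWith Kg g s)
    (hfA : ∀ x ∈ s, ‖f x‖ ≤ A) (hgB : ∀ x ∈ s, ‖g x‖ ≤ B) :
    LipschitzOnWith (Kf * B + A * Kg) (fun x => f x * g x) s := by
  refine LipschitzOnWith.of_dist_le_mul fun x hx y hy => ?_
  have hfxy := hf.dist_le_mul x hx y hy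
  have hgxy := hg.dist_le_mul x hx y hy
  rw [dist_eq_norm] at hfxy hgxy ⊢
  calc ‖f x * g x - f y * g y‖ = ‖(f x - f y) * g x + f y * (g x - g y)‖ := by
        congr 1; noncomm_ring
    _ ≤ ‖f x - f y‖ * B + A * ‖g x - g y‖ := by
        refine (norm_add_le _ _).trans (add_le_add ?_ ?_)
        · exact (norm_mul_le _ _).trans (by gcongr; exact hgB x hx)
        · exact (norm_mul_le _ _).trans (by gcongr; exact hfA y hy)
    _ ≤ Kf * dist x y * B + A * (Kg * dist x y) := by gcongr
    _ = ↑(Kf * B + A * Kg) * dist x y := by push_cast; ring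

theorem LipschitzOnWith.mul_add_const {α : Type*} [PseudoMetricSpace α] {a q : α → ℝ}
    {s : Set α} {Ma Mq A Q : ℝ≥0} (ha : LipschitzOnWith Ma a s) (hq : LipschitzOnWith Mq q s)
    (hA : ∀ x ∈ s, ‖a x‖ ≤ A) (hQ : ∀ x ∈ s, ‖q x‖ ≤ Q) (c : ℝ) :
    LipschitzOnWith (Ma * Q + A * Mq + ‖c‖₊ * Ma) (fun x => a x * (q x + c)) s := by
  have hsplit : (fun x => a x * (q x + c)) = fun x => a x * q x + c • a x := by
    ext x
    rw [smul_eq_mul]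
    ring
  rw [hsplit]
  exact (ha.mul_of_norm_le hq hA hQ).add ((lipschitzWith_smul c).comp_lipschitzOnWith ha)

theorem IsCompact.exists_nnbound_of_continuousOn {α E : Type*} [TopologicalSpace α]
    [SeminormedAddCommGroup E] {f : α → E} {s : Set α} (hs : IsCompact s)
    (hf : ContinuousOn f s) : ∃ A : ℝ≥0, ∀ x ∈ s, ‖f x‖ ≤ A := by
  obtain ⟨A, hA⟩ := hs.exists_bound_of_continuousOn hf
  exact ⟨A.toNNReal, fun x hx => (hA x hx).trans (Real.le_coe_toNNReal A)⟩

theorem IsCompact.le_ciSup_of_continuousOn {α : Type*} [TopologicalSpace α] {f : α → ℝ}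
    {s : Set α} (hs : IsCompact s) (hf : ContinuousOn f s) {x : α} (hx : x ∈ s) :
    f x ≤ ⨆ y : s, f y := by
  refine le_ciSup (f := fun y : s => f y) ?_ ⟨x, hx⟩
  simpa only [image_eq_range] using hs.bddAbove_image hf

theorem gronwallBound_le_mul_exp {δ K ε : ℝ} (hK : 0 < K) (hε : 0 ≤ ε) (x : ℝ) :
    gronwallBound δ K ε x ≤ (δ + ε / K) * Real.exp (K * x) := by
  have : 0 ≤ ε / K := div_nonneg hε hK.le
  rw [gronwallBound_of_K_ne_0 hK.ne']
  dsimp only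
  nlinarith

theorem eventually_slope_mul_lt_of_lipschitzOnWith {φ w : ℝ → ℝ} {s : Set ℝ} {L : ℝ≥0}
    {x w' r : ℝ} (hφ : LipschitzOnWith L φ s) (hs : s ∈ 𝓝[>] x) (hx : x ∈ s)
    (hw : HasDerivAt w w' x) (hwx : 0 ≤ w x) (hr : φ x * w' + L * w x < r) :
    ∀ᶠ z in 𝓝[>] x, slope (fun t => φ t * w t) x z < r := by
  have hφx : Tendsto φ (𝓝[>] x) (𝓝 (φ x)) :=
    (hφ.continuousOn.continuousWithinAt hx).mono_left (nhdsWithin_le_of_mem hs)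
  have hwx' : Tendsto (slope w x) (𝓝[>] x) (𝓝 w') :=
    (hasDerivWithinAt_iff_tendsto_slope' (lt_irrefl x)).1 hw.hasDerivWithinAt
  have hlim := ((hφx.mul hwx').add_const (L * w x)).eventually_lt_const hr
  filter_upwards [hlim, hs, self_mem_nhdsWithin] with z hz hzs (hxz : x < z)
  have hφslope : slope φ x z ≤ L := by
    rw [slope_def_field, div_le_iff₀ (sub_pos.2 hxz)]
    have := hφ.dist_le_mul z hzs x hx
    rw [Real.dist_eq, Real.dist_eq, abs_of_pos (sub_pos.2 hxz)] at this
    exact (le_abs_self _).trans this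
  have hsplit : slope (fun t => φ t * w t) x z = φ z * slope w x z + slope φ x z * w x := by
    simp only [slope_def_field]
    field_simp [(sub_pos.2 hxz).ne']
    ring
  rw [hsplit]
  nlinarith [mul_le_mul_of_nonneg_right hφslope hwx]

theorem mul_add_le_gronwallBound_of_lipschitzOnWith {a b δ K ε : ℝ} {L : ℝ≥0}
    {φ w w' ψ ψ' : ℝ → ℝ} (hφ : LipschitzOnWith L φ (Icc a b))
    (hw : ∀ t ∈ Icc a b, HasDerivAt w (w' t) t) (hψ : ∀ t ∈ Icc a b, HasDerivAt ψ (ψ' t) t)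
    (hw₀ : ∀ t ∈ Icc a b, 0 ≤ w t) (ha : φ a * w a + ψ a ≤ δ)
    (bound : ∀ t ∈ Ico a b, φ t * w' t + L * w t + ψ' t ≤ K * (φ t * w t + ψ t) + ε) :
    ∀ t ∈ Icc a b, φ t * w t + ψ t ≤ gronwallBound δ K ε (t - a) := by
  refine le_gronwallBound_of_liminf_deriv_right_le
    ((hφ.continuousOn.mul fun t ht => (hw t ht).continuousAt.continuousWithinAt).add
      fun t ht => (hψ t ht).continuousAt.continuousWithinAt)
    (fun x hx r hr => ?_) ha bound
  have hxI := Ico_subset_Icc_self hx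
  obtain ⟨r₁, hr₁, hr₁r⟩ := exists_between (lt_sub_iff_add_lt.2 hr)
  have hprod := eventually_slope_mul_lt_of_lipschitzOnWith hφ (Icc_mem_nhdsGT_of_mem hx)
    hxI (hw x hxI) (hw₀ x hxI) hr₁
  have hψx : ∀ᶠ z in 𝓝[>] x, slope ψ x z < r - r₁ :=
    ((hasDerivWithinAt_iff_tendsto_slope' (s := Ioi x) (lt_irrefl x)).1
      (hψ x hxI).hasDerivWithinAt).eventually_lt_const (lt_sub_comm.1 hr₁r)
  refine (hprod.and hψx).mp (eventually_mem_nhdsWithin.mono fun z (hxz : x < z) ⟨h₁, h₂⟩ => ?_)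
    |>.frequently
  have hsum : (z - x)⁻¹ * (φ z * w z + ψ z - (φ x * w x + ψ x)) =
      slope (fun t => φ t * w t) x z + slope ψ x z := by
    simp only [slope_def_field]
    field_simp [(sub_pos.2 hxz).ne']
    ring
  rw [hsum]
  linarith

section InnerProductSpace

variable {E : Type*} [NormedAddCommGroup E] [InnerProductSpace ℝ E]

theorem energy_derivative_le {x y z : E} {φ κ L : ℝ} (hκ : 0 ≤ κ) (hφ : 0 ≤ φ)
    (hL : L ≤ κ * φ) :
    φ * (2 * ⟪x, y⟫) + L * ‖x‖ ^ 2 + 2 * ⟪y, z - φ • x⟫ ≤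
      (κ + 1) * (φ * ‖x‖ ^ 2 + ‖y‖ ^ 2) + ‖z‖ ^ 2 := by
  have hcancel : φ * (2 * ⟪x, y⟫) + 2 * ⟪y, z - φ • x⟫ = 2 * ⟪y, z⟫ := by
    rw [inner_sub_right, real_inner_smul_right, real_inner_comm x y]
    ring
  have hyz : 2 * ⟪y, z⟫ ≤ ‖y‖ ^ 2 + ‖z‖ ^ 2 := by
    nlinarith [real_inner_le_norm y z, two_mul_le_add_sq ‖y‖ ‖z‖]
  have hLx : L * ‖x‖ ^ 2 ≤ κ * φ * ‖x‖ ^ 2 := by gcongr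
  nlinarith [mul_nonneg hφ (sq_nonneg ‖x‖), mul_nonneg hκ (sq_nonneg ‖y‖)]

theorem weighted_energy_le_mul_exp {a b κ G : ℝ} {L : ℝ≥0} {φ : ℝ → ℝ} {g v v' : ℝ → E}
    (hφ : LipschitzOnWith L φ (Icc a b)) (hκ : 0 ≤ κ) (hφ₀ : ∀ t ∈ Icc a b, 0 ≤ φ t)
    (hL : ∀ t ∈ Icc a b, (L : ℝ) ≤ κ * φ t) (hg : ∀ t ∈ Icc a b, ‖g t‖ ^ 2 ≤ G)
    (hv : ∀ t ∈ Icc a b, HasDerivAt v (v' t) t)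
    (hv' : ∀ t ∈ Icc a b, HasDerivAt v' (g t - φ t • v t) t) :
    ∀ t ∈ Icc a b, φ t * ‖v t‖ ^ 2 + ‖v' t‖ ^ 2 ≤
      (φ a * ‖v a‖ ^ 2 + ‖v' a‖ ^ 2 + G) * Real.exp ((κ + 1) * (t - a)) := by
  intro t ht
  have hκ₁ : 0 < κ + 1 := by linarith
  have hG : 0 ≤ G := (sq_nonneg _).trans (hg a (left_mem_Icc.2 (ht.1.trans ht.2)))
  have hgronwall := mul_add_le_gronwallBound_of_lipschitzOnWith hφ
    (fun t ht => (hv t ht).norm_sq) (fun t ht => (hv' t ht).norm_sq)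
    (fun t _ => sq_nonneg ‖v t‖) le_rfl
    (fun t ht => energy_derivative_le hκ (hφ₀ t (Ico_subset_Icc_self ht))
      (hL t (Ico_subset_Icc_self ht)) |>.trans
        (add_le_add_right (hg t (Ico_subset_Icc_self ht)) _)) t ht
  refine hgronwall.trans ((gronwallBound_le_mul_exp hκ₁ hG _).trans ?_)
  gcongr
  exact div_le_self hG (by linarith)

theorem energy_le_of_comparable_weight {a b m M κ μ G : ℝ} {L : ℝ≥0} {φ : ℝ → ℝ}
    {g v v' : ℝ → E} (hφ : LipschitzOnWith L φ (Icc a b)) (hκ : 0 ≤ κ) (hm : 0 < m)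
    (hμ : 0 < μ) (hφm : ∀ t ∈ Icc a b, m * μ ≤ φ t) (hφM : φ a ≤ M * μ)
    (hL : ∀ t ∈ Icc a b, (L : ℝ) ≤ κ * φ t) (hg : ∀ t ∈ Icc a b, ‖g t‖ ^ 2 ≤ G)
    (hv : ∀ t ∈ Icc a b, HasDerivAt v (v' t) t)
    (hv' : ∀ t ∈ Icc a b, HasDerivAt v' (g t - φ t • v t) t) :
    ∀ t ∈ Icc a b, μ * ‖v t‖ ^ 2 + ‖v' t‖ ^ 2 ≤
      (1 / m + 1) * Real.exp ((κ + 1) * (b - a)) * (M + 1) *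
        (μ * ‖v a‖ ^ 2 + ‖v' a‖ ^ 2 + G) := by
  intro t ht
  have hφ₀ : ∀ t ∈ Icc a b, 0 ≤ φ t := fun t ht => (mul_pos hm hμ).le.trans (hφm t ht)
  have hE := weighted_energy_le_mul_exp hφ hκ hφ₀ hL hg hv hv' t ht
  have ha : a ∈ Icc a b := left_mem_Icc.2 (ht.1.trans ht.2)
  have hM : 0 ≤ M := nonneg_of_mul_nonneg_left ((hφ₀ a ha).trans hφM) hμ
  have hG : 0 ≤ G := (sq_nonneg _).trans (hg a ha)
  have hlower : μ * ‖v t‖ ^ 2 + ‖v' t‖ ^ 2 ≤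
      (1 / m + 1) * (φ t * ‖v t‖ ^ 2 + ‖v' t‖ ^ 2) := by
    have hμv : μ * ‖v t‖ ^ 2 ≤ 1 / m * (φ t * ‖v t‖ ^ 2) := by
      rw [one_div, inv_mul_eq_div, le_div_iff₀ hm]
      nlinarith [mul_le_mul_of_nonneg_right (hφm t ht) (sq_nonneg ‖v t‖)]
    nlinarith [mul_nonneg (hφ₀ t ht) (sq_nonneg ‖v t‖),
      mul_nonneg (one_div_nonneg.2 hm.le) (sq_nonneg ‖v' t‖)]
  have hupper : φ a * ‖v a‖ ^ 2 + ‖v' a‖ ^ 2 + G ≤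
      (M + 1) * (μ * ‖v a‖ ^ 2 + ‖v' a‖ ^ 2 + G) := by
    nlinarith [mul_le_mul_of_nonneg_right hφM (sq_nonneg ‖v a‖), sq_nonneg ‖v' a‖,
      mul_nonneg hM (mul_nonneg hμ.le (sq_nonneg ‖v a‖)), mul_nonneg hM (sq_nonneg ‖v' a‖),
      mul_nonneg hM hG]
  calc μ * ‖v t‖ ^ 2 + ‖v' t‖ ^ 2
      ≤ (1 / m + 1) * ((M + 1) * (μ * ‖v a‖ ^ 2 + ‖v' a‖ ^ 2 + G) *
          Real.exp ((κ + 1) * (b - a))) := by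
        refine hlower.trans (mul_le_mul_of_nonneg_left (hE.trans ?_) (by positivity))
        gcongr
        exact ht.2
    _ = _ := by ring

end InnerProductSpace

theorem le_div_mul_of_le {x c₀ c : ℝ} (hx : 0 ≤ x) (hc₀ : 0 < c₀) (hc : c₀ ≤ c) :
    x ≤ x / c₀ * c := by
  rw [div_mul_eq_mul_div, le_div_iff₀ hc₀]
  exact mul_le_mul_of_nonneg_left hc hx

theorem mul_add_le_of_abs_le {x y A Q c₀ c : ℝ} (hx : |x| ≤ A) (hy : |y| ≤ Q) (hc₀ : 0 < c₀)
    (hc : c₀ ≤ c) : x * (y + c) ≤ A * (Q / c₀ + 1) * c := by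
  have hA : 0 ≤ A := (abs_nonneg x).trans hx
  have hQ : 0 ≤ Q := (abs_nonneg y).trans hy
  calc x * (y + c) ≤ |x| * |y + c| := (le_abs_self _).trans (abs_mul x (y + c)).le
    _ ≤ A * (Q + c) := by
        gcongr
        calc |y + c| ≤ |y| + |c| := abs_add_le y c
          _ ≤ Q + c := by rw [abs_of_pos (hc₀.trans_le hc)]; gcongr
    _ ≤ A * (Q / c₀ * c + c) := by gcongr; exact le_div_mul_of_le hQ hc₀ hc
    _ = A * (Q / c₀ + 1) * c := by ring

theorem add_mul_le_div_mul {L₀ K a₀ c₀ c φ : ℝ} (hL₀ : 0 ≤ L₀) (hK : 0 ≤ K) (ha₀ : 0 < a₀)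
    (hc₀ : 0 < c₀) (hc : c₀ ≤ c) (hφ : a₀ * c ≤ φ) :
    L₀ + c * K ≤ (L₀ / c₀ + K) / a₀ * φ :=
  calc L₀ + c * K ≤ L₀ / c₀ * c + c * K := by gcongr; exact le_div_mul_of_le hL₀ hc₀ hc
    _ = (L₀ / c₀ + K) / a₀ * (a₀ * c) := by field_simp
    _ ≤ (L₀ / c₀ + K) / a₀ * φ := by gcongr

/-- Energy estimate for the inhomogeneous equation `v'' + a(t)(q(t) + ν²)v = g(t)` on `[0,T]`
with Lipschitz `a, q`, `a ≥ a₀ > 0`, `q ≥ 0`, `ν ≥ ν₀ > 0`, `g` continuous: there is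
`C > 0` independent of `ν` and `g` with
`ν²|v(t)|² + |v'(t)|² ≤ C(ν²|v(0)|² + |v'(0)|² + sup_{0≤s≤T}|g(s)|²)` on `[0,T]`. -/
theorem energy_estimate_inhomogeneous
    (T a₀ ν₀ : ℝ) (hT : 0 < T) (ha₀ : 0 < a₀) (hν₀ : 0 < ν₀)
    (a q : ℝ → ℝ) (Ma Mq : NNReal)
    (ha : LipschitzOnWith Ma a (Icc 0 T)) (hq : LipschitzOnWith Mq q (Icc 0 T))
    (haa : ∀ t ∈ Icc (0:ℝ) T, a₀ ≤ a t) (hqq : ∀ t ∈ Icc (0:ℝ) T, 0 ≤ q t) :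
    ∃ C > 0, ∀ ν : ℝ, ν₀ ≤ ν → ∀ g : ℝ → ℂ, ContinuousOn g (Icc 0 T) →
      ∀ v v' : ℝ → ℂ,
      (∀ t ∈ Icc (0:ℝ) T, HasDerivAt v (v' t) t) →
      (∀ t ∈ Icc (0:ℝ) T,
        HasDerivAt v' (g t - (((a t * (q t + ν ^ 2)) : ℝ) : ℂ) * v t) t) →
      ∀ t ∈ Icc (0:ℝ) T,
        ν ^ 2 * ‖v t‖ ^ 2 + ‖v' t‖ ^ 2 ≤
          C * (ν ^ 2 * ‖v 0‖ ^ 2 + ‖v' 0‖ ^ 2 + ⨆ s : Icc (0:ℝ) T, ‖g (s : ℝ)‖ ^ 2) := by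
  obtain ⟨A, hA⟩ := isCompact_Icc.exists_nnbound_of_continuousOn ha.continuousOn
  obtain ⟨Q, hQ⟩ := isCompact_Icc.exists_nnbound_of_continuousOn hq.continuousOn
  set κ : ℝ := ((Ma * Q + A * Mq) / ν₀ ^ 2 + Ma) / a₀
  set M : ℝ := A * (Q / ν₀ ^ 2 + 1)
  refine ⟨(1 / a₀ + 1) * Real.exp ((κ + 1) * (T - 0)) * (M + 1), by positivity, ?_⟩
  intro ν hν g hg v v' hv hv'
  have hνν : ν₀ ^ 2 ≤ ν ^ 2 := pow_le_pow_left₀ hν₀.le hν 2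
  have hφ : ∀ t ∈ Icc 0 T, a₀ * ν ^ 2 ≤ a t * (q t + ν ^ 2) := fun t ht =>
    mul_le_mul (haa t ht) (le_add_of_nonneg_left (hqq t ht)) (sq_nonneg ν)
      (ha₀.le.trans (haa t ht))
  have h0 : (0 : ℝ) ∈ Icc 0 T := left_mem_Icc.2 hT.le
  refine energy_le_of_comparable_weight (ha.mul_add_const hq hA hQ (ν ^ 2)) (by positivity) ha₀
    (pow_pos (hν₀.trans_le hν) 2) hφ
    (mul_add_le_of_abs_le (hA 0 h0) (hQ 0 h0) (by positivity) hνν)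
    (fun t ht => ?_) (fun s hs => isCompact_Icc.le_ciSup_of_continuousOn (hg.norm.pow 2) hs)
    hv (by simpa only [Complex.real_smul] using hv')
  simpa using add_mul_le_div_mul (by positivity) Ma.coe_nonneg ha₀ (by positivity) hνν (hφ t ht)
end

section
/- Consider the scalar ODE v_ε'' + a_ε(t)(q_ε(t) + ν²)v_ε = 0 on [0,T] where a_ε, q_ε ∈ C^∞([0,T]), a_ε(t) ≥ ã₀ > 0 and q_ε(t) ≥ 0. Let S_ε(t) = diag(a_ε(t)(1+q_ε(t)/ν²), 1). If ‖∂_t S_ε(t)‖ ≤ M_ε uniformly in t, and the quadratic form of S_ε(t) is bounded below by min(ã₀,1), then every solution satisfies ν²|v_ε(t)|² + |v_ε'(t)|² ≤ C·exp(C·M_ε·T)·(ν²|v_ε(0)|² + |v_ε'(0)|²), with C depending only on ã₀ and sup_{t,ε} a_ε(t)(1+q_ε(t)/ν²). -/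
open Set

/-- Quantitative energy estimate with explicit dependence on the derivative bound `M` of
the symmetriser `S(t) = diag(a(t)(1 + q(t)/ν²), 1)`: if `a ≥ ã₀ > 0`, `q ≥ 0`,
`a(t)(1 + q(t)/ν²) ≤ b₁` and `|∂_t (a(t)(1 + q(t)/ν²))| ≤ M` on `[0,T]`, then every
solution of `v'' + a(t)(q(t) + ν²)v = 0` satisfies
`ν²|v(t)|² + |v'(t)|² ≤ C exp(C M T)(ν²|v(0)|² + |v'(0)|²)` with `C` depending only on
`ã₀` and the upper bound `b₁`. -/
theorem energy_estimate_with_explicit_constant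
    (a₀ b₁ : ℝ) (ha₀ : 0 < a₀) :
    ∃ C > 0, ∀ T M ν : ℝ, 0 < T → 0 ≤ M → 0 < ν →
      ∀ a q a' q' : ℝ → ℝ,
      (∀ t ∈ Icc (0:ℝ) T, HasDerivAt a (a' t) t) →
      (∀ t ∈ Icc (0:ℝ) T, HasDerivAt q (q' t) t) →
      (∀ t ∈ Icc (0:ℝ) T, a₀ ≤ a t) →
      (∀ t ∈ Icc (0:ℝ) T, 0 ≤ q t) →
      (∀ t ∈ Icc (0:ℝ) T, a t * (1 + q t / ν ^ 2) ≤ b₁) →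
      (∀ t ∈ Icc (0:ℝ) T, |a' t * (1 + q t / ν ^ 2) + a t * (q' t / ν ^ 2)| ≤ M) →
      ∀ v v' : ℝ → ℂ,
      (∀ t ∈ Icc (0:ℝ) T, HasDerivAt v (v' t) t) →
      (∀ t ∈ Icc (0:ℝ) T, HasDerivAt v' (-(((a t * (q t + ν ^ 2)) : ℝ) : ℂ) * v t) t) →
      ∀ t ∈ Icc (0:ℝ) T,
        ν ^ 2 * ‖v t‖ ^ 2 + ‖v' t‖ ^ 2 ≤
          C * Real.exp (C * M * T) * (ν ^ 2 * ‖v 0‖ ^ 2 + ‖v' 0‖ ^ 2) := by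
  classical
  set c₀ : ℝ := min a₀ 1 with hc₀def
  set c₁ : ℝ := max b₁ 1 with hc₁def
  have hc₀ : 0 < c₀ := lt_min ha₀ one_pos
  refine ⟨max (c₁ / c₀) (1 / a₀), lt_max_of_lt_right (by positivity), ?_⟩
  intro T M ν hT hM hν a q a' q' ha hq ha₀' hq0 hb₁ hM' v v' hv hv'
  set C : ℝ := max (c₁ / c₀) (1 / a₀) with hCdef
  have hC1 : 1 / a₀ ≤ C := le_max_right _ _
  have hC0 : 0 < C := lt_of_lt_of_le (by positivity) hC1
  -- the coefficient b and its derivative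
  set b : ℝ → ℝ := fun t => a t * (1 + q t / ν ^ 2) with hbdef
  set b' : ℝ → ℝ := fun t => a' t * (1 + q t / ν ^ 2) + a t * (q' t / ν ^ 2) with hb'def
  have hbderiv : ∀ t ∈ Icc (0:ℝ) T, HasDerivAt b (b' t) t := by
    intro t ht
    exact (ha t ht).mul (((hq t ht).div_const (ν ^ 2)).const_add 1)
  have hblb : ∀ t ∈ Icc (0:ℝ) T, a₀ ≤ b t := by
    intro t ht
    have h1 : (1:ℝ) ≤ 1 + q t / ν ^ 2 := by
      have := hq0 t ht
      have : 0 ≤ q t / ν ^ 2 := by positivity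
      linarith
    calc a₀ = a₀ * 1 := by ring
    _ ≤ a t * (1 + q t / ν ^ 2) :=
        mul_le_mul (ha₀' t ht) h1 zero_le_one (le_trans ha₀.le (ha₀' t ht))
  -- the energy
  set E : ℝ → ℝ := fun t => b t * (ν ^ 2 * ‖v t‖ ^ 2) + ‖v' t‖ ^ 2 with hEdef
  have hnormsq : ∀ (w w' : ℝ → ℂ) (t : ℝ), HasDerivAt w (w' t) t →
      HasDerivAt (fun s => ‖w s‖ ^ 2) (2 * (inner ℝ (w t) (w' t) : ℝ)) t := by
    intro w w' t hw
    have h := (HasDerivAt.inner ℝ hw hw)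
    have : (inner ℝ (w t) (w' t) : ℝ) + inner ℝ (w' t) (w t) = 2 * inner ℝ (w t) (w' t) := by
      rw [real_inner_comm (w' t) (w t)]; ring
    rw [this] at h
    convert h using 1
    case e'_4 => rfl
    case e'_5 => rfl
    funext s
    exact (real_inner_self_eq_norm_sq (w s)).symm
  have hEderiv : ∀ t ∈ Icc (0:ℝ) T, HasDerivAt E (b' t * (ν ^ 2 * ‖v t‖ ^ 2)) t := by
    intro t ht
    have h1 : HasDerivAt (fun s => b s * (ν ^ 2 * ‖v s‖ ^ 2))
        (b' t * (ν ^ 2 * ‖v t‖ ^ 2) + b t * (ν ^ 2 * (2 * (inner ℝ (v t) (v' t) : ℝ)))) t :=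
      (hbderiv t ht).mul ((hnormsq v v' t (hv t ht)).const_mul (ν ^ 2))
    have h2 : HasDerivAt (fun s => ‖v' s‖ ^ 2)
        (2 * (inner ℝ (v' t) (-(((a t * (q t + ν ^ 2)) : ℝ) : ℂ) * v t) : ℝ)) t :=
      hnormsq v' (fun s => -(((a s * (q s + ν ^ 2)) : ℝ) : ℂ) * v s) t (hv' t ht)
    have hkey : (inner ℝ (v' t) (-(((a t * (q t + ν ^ 2)) : ℝ) : ℂ) * v t) : ℝ)
        = -(a t * (q t + ν ^ 2)) * (inner ℝ (v t) (v' t) : ℝ) := by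
      have : (-(((a t * (q t + ν ^ 2)) : ℝ) : ℂ) * v t) = (-(a t * (q t + ν ^ 2))) • v t := by
        rw [Complex.real_smul]; push_cast; ring
      rw [this, real_inner_smul_right, real_inner_comm]
    rw [hkey] at h2
    have := h1.add h2
    convert this using 1
    case e'_4 => rfl
    case e'_5 => rfl
    case e'_8 => rfl
    have hν2 : (ν:ℝ) ^ 2 ≠ 0 := by positivity
    have hq2 : q t / ν ^ 2 * ν ^ 2 = q t := div_mul_cancel₀ _ hν2
    have hone : (1 + q t / ν ^ 2) * ν ^ 2 = q t + ν ^ 2 := by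
      rw [add_mul, one_mul, div_mul_cancel₀ _ hν2]; ring
    have hab : a t * (q t + ν ^ 2) = b t * ν ^ 2 := by
      rw [← hone]; simp only [hbdef]; ring
    rw [hab]; ring
  -- Gronwall
  set K : ℝ := M / a₀ with hKdef
  have hK : 0 ≤ K := by positivity
  set F : ℝ → ℝ := fun t => E t * Real.exp (-K * t) with hFdef
  have hFderiv : ∀ t ∈ Icc (0:ℝ) T,
      HasDerivAt F ((b' t * (ν ^ 2 * ‖v t‖ ^ 2) - K * E t) * Real.exp (-K * t)) t := by
    intro t ht
    have h1 : HasDerivAt (fun s => Real.exp (-K * s)) (Real.exp (-K * t) * (-K * 1)) t :=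
      ((hasDerivAt_id t).const_mul (-K)).exp
    have := (hEderiv t ht).mul h1
    convert this using 1
    case e'_4 => rfl
    case e'_5 => rfl
    case e'_8 => rfl
    ring
  have hEnn : ∀ t ∈ Icc (0:ℝ) T, 0 ≤ E t := by
    intro t ht
    have h1 : 0 ≤ b t := le_trans ha₀.le (hblb t ht)
    have h3 : (0:ℝ) ≤ ν ^ 2 * ‖v t‖ ^ 2 := by positivity
    simp only [hEdef]
    nlinarith [sq_nonneg ‖v' t‖]
  have hF'le : ∀ t ∈ Icc (0:ℝ) T,
      (b' t * (ν ^ 2 * ‖v t‖ ^ 2) - K * E t) * Real.exp (-K * t) ≤ 0 := by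
    intro t ht
    apply mul_nonpos_of_nonpos_of_nonneg _ (Real.exp_nonneg _)
    have hb'le : b' t ≤ M := le_trans (le_abs_self _) (hM' t ht)
    have hvv : (0:ℝ) ≤ ν ^ 2 * ‖v t‖ ^ 2 := by positivity
    have h1 : b' t * (ν ^ 2 * ‖v t‖ ^ 2) ≤ M * (ν ^ 2 * ‖v t‖ ^ 2) :=
      mul_le_mul_of_nonneg_right hb'le hvv
    have h2 : M * (ν ^ 2 * ‖v t‖ ^ 2) ≤ K * E t := by
      have hKa : M = K * a₀ := by
        rw [hKdef]; field_simp
      have h3 : K * (a₀ * (ν ^ 2 * ‖v t‖ ^ 2)) ≤ K * (b t * (ν ^ 2 * ‖v t‖ ^ 2)) :=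
        mul_le_mul_of_nonneg_left (mul_le_mul_of_nonneg_right (hblb t ht) hvv) hK
      simp only [hEdef]
      nlinarith [sq_nonneg ‖v' t‖]
    linarith
  have hanti : AntitoneOn F (Icc 0 T) := by
    apply antitoneOn_of_deriv_nonpos (convex_Icc 0 T)
    · exact fun t ht => ((hFderiv t ht).continuousAt).continuousWithinAt
    · intro t ht
      rw [interior_Icc] at ht
      exact (hFderiv t (Ioo_subset_Icc_self ht)).differentiableAt.differentiableWithinAt
    · intro t ht
      rw [interior_Icc] at ht
      rw [(hFderiv t (Ioo_subset_Icc_self ht)).deriv]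
      exact hF'le t (Ioo_subset_Icc_self ht)
  intro t ht
  have h0mem : (0:ℝ) ∈ Icc (0:ℝ) T := ⟨le_refl _, hT.le⟩
  have hFle : F t ≤ F 0 := hanti h0mem ht ht.1
  have hEt : E t ≤ E 0 * Real.exp (K * t) := by
    have h1 : E t * Real.exp (-K * t) ≤ E 0 := by
      have h := hFle
      simp only [hFdef] at h
      simpa using h
    have h2 : Real.exp (-K * t) * Real.exp (K * t) = 1 := by
      rw [← Real.exp_add]; simp
    calc E t = E t * Real.exp (-K * t) * Real.exp (K * t) := by
          rw [mul_assoc, h2, mul_one]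
    _ ≤ E 0 * Real.exp (K * t) := mul_le_mul_of_nonneg_right h1 (Real.exp_nonneg _)
  -- E bounds
  have hlow : c₀ * (ν ^ 2 * ‖v t‖ ^ 2 + ‖v' t‖ ^ 2) ≤ E t := by
    have h1 : c₀ ≤ b t := le_trans (min_le_left _ _) (hblb t ht)
    have h2 : c₀ ≤ 1 := min_le_right _ _
    have hvv : (0:ℝ) ≤ ν ^ 2 * ‖v t‖ ^ 2 := by positivity
    simp only [hEdef]
    nlinarith [sq_nonneg ‖v' t‖]
  have hhigh : E 0 ≤ c₁ * (ν ^ 2 * ‖v 0‖ ^ 2 + ‖v' 0‖ ^ 2) := by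
    have h1 : b 0 ≤ c₁ := le_trans (hb₁ 0 h0mem) (le_max_left _ _)
    have h2 : (1:ℝ) ≤ c₁ := le_max_right _ _
    have hvv : (0:ℝ) ≤ ν ^ 2 * ‖v 0‖ ^ 2 := by positivity
    simp only [hEdef]
    nlinarith [sq_nonneg ‖v' 0‖]
  have hX0 : (0:ℝ) ≤ ν ^ 2 * ‖v 0‖ ^ 2 + ‖v' 0‖ ^ 2 := by positivity
  have hexpmono : Real.exp (K * t) ≤ Real.exp (C * M * T) := by
    apply Real.exp_le_exp.mpr
    have hKC : K ≤ C * M := by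
      rw [hKdef]
      calc M / a₀ = (1 / a₀) * M := by ring
      _ ≤ C * M := mul_le_mul_of_nonneg_right hC1 hM
    calc K * t ≤ K * T := mul_le_mul_of_nonneg_left ht.2 hK
    _ ≤ C * M * T := mul_le_mul_of_nonneg_right hKC hT.le
  have hc₁C : c₁ / c₀ ≤ C := le_max_left _ _
  have hE0nn : 0 ≤ E 0 := hEnn 0 h0mem
  calc ν ^ 2 * ‖v t‖ ^ 2 + ‖v' t‖ ^ 2 ≤ E t / c₀ := by
        rw [le_div_iff₀ hc₀, mul_comm]; exact hlow
  _ ≤ (E 0 * Real.exp (K * t)) / c₀ := by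
        apply div_le_div_of_nonneg_right hEt hc₀.le
  _ ≤ (c₁ * (ν ^ 2 * ‖v 0‖ ^ 2 + ‖v' 0‖ ^ 2) * Real.exp (C * M * T)) / c₀ := by
        apply div_le_div_of_nonneg_right _ hc₀.le
        calc E 0 * Real.exp (K * t) ≤ E 0 * Real.exp (C * M * T) :=
              mul_le_mul_of_nonneg_left hexpmono hE0nn
        _ ≤ c₁ * (ν ^ 2 * ‖v 0‖ ^ 2 + ‖v' 0‖ ^ 2) * Real.exp (C * M * T) :=
              mul_le_mul_of_nonneg_right hhigh (Real.exp_nonneg _)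
  _ = (c₁ / c₀) * Real.exp (C * M * T) * (ν ^ 2 * ‖v 0‖ ^ 2 + ‖v' 0‖ ^ 2) := by ring
  _ ≤ C * Real.exp (C * M * T) * (ν ^ 2 * ‖v 0‖ ^ 2 + ‖v' 0‖ ^ 2) := by
        apply mul_le_mul_of_nonneg_right _ hX0
        exact mul_le_mul_of_nonneg_right hc₁C (Real.exp_nonneg _)
end

section
/- Uniqueness of very weak solutions at the Fourier level: let V_ε : [0,T] → ℂ² satisfy V_ε'(t) = iν A_ε(t)V_ε(t) + F_ε(t) with V_ε(0) = 0, where A_ε, S_ε are as in the symmetrised hyperbolic system with S_ε A_ε = A_ε* S_ε, c₁|V|² ≤ (S_ε V, V) ≤ c₂|V|² uniformly, ‖∂_t S_ε(t)‖ ≤ c ε^{-N}, and for every ℓ ∈ ℕ there is c_ℓ with sup_t |F_ε(t)| ≤ c_ℓ ε^{ℓ} (F_ε is negligible). Then for every ℓ ∈ ℕ there exists C_ℓ such that sup_{t∈[0,T]} |V_ε(t)| ≤ C_ℓ ε^{ℓ} for all ε ∈ (0,1]. -/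
open Set Real

/-!
With `V = (V₁, V₂)` carrying the sup norm, the system reads `V' = G(t, V) + F` where the
field `G` is linear in `V` with coefficient bounded by `ν c₂`, so `‖V'‖ ≤ ν c₂ ‖V‖ + ‖F‖`.
Since `V(0) = 0`, Grönwall's inequality bounds `‖V(t)‖` by `sup ‖F‖ · exp(ν c₂ T) / (ν c₂)`,
and the factor `ε ^ ℓ` of the forcing passes to the solution.
-/

theorem norm_le_of_norm_deriv_le_of_eq_zero {E : Type*} [NormedAddCommGroup E]
    [NormedSpace ℝ E] {f f' : ℝ → E} {K δ T : ℝ} (hK : K ≠ 0)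
    (hf : ∀ t ∈ Icc 0 T, HasDerivAt f (f' t) t) (hf0 : f 0 = 0)
    (bound : ∀ t ∈ Ico 0 T, ‖f' t‖ ≤ K * ‖f t‖ + δ) :
    ∀ t ∈ Icc 0 T, ‖f t‖ ≤ δ / K * (exp (K * t) - 1) := by
  intro t ht
  have hcont : ContinuousOn f (Icc 0 T) := fun s hs => (hf s hs).continuousAt.continuousWithinAt
  have hgron := norm_le_gronwallBound_of_norm_deriv_right_le hcont
    (fun s hs => (hf s (Ico_subset_Icc_self hs)).hasDerivWithinAt) (norm_le_zero_iff.2 hf0)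
    bound t ht
  simpa [gronwallBound_of_K_ne_0 hK] using hgron

theorem norm_symmetrizedField_le (ν β : ℝ) (v₁ v₂ g₁ g₂ : ℂ) :
    ‖(Complex.I * ν * v₂ + g₁, Complex.I * ν * β * v₁ + g₂)‖
      ≤ |ν| * max 1 |β| * ‖(v₁, v₂)‖ + ‖(g₁, g₂)‖ := by
  refine max_le ((norm_add_le _ _).trans (add_le_add ?_ (norm_fst_le (g₁, g₂))))
    ((norm_add_le _ _).trans (add_le_add ?_ (norm_snd_le (g₁, g₂))))
  · simp only [norm_mul, Complex.norm_I, Complex.norm_real, Real.norm_eq_abs, one_mul, mul_assoc]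
    gcongr
    exact (norm_snd_le (v₁, v₂)).trans
      (le_mul_of_one_le_left (norm_nonneg _) (le_max_left _ _))
  · simp only [norm_mul, Complex.norm_I, Complex.norm_real, Real.norm_eq_abs, one_mul, mul_assoc]
    gcongr
    · exact le_max_right _ _
    · exact norm_fst_le (v₁, v₂)

theorem very_weak_uniqueness_fourier_general
    (T c₁ c₂ ν : ℝ) (hν : 0 < ν)
    (hc₁ : 0 < c₁) (h1c₂ : 1 ≤ c₂)
    (b : ℝ → ℝ → ℝ)
    (hbb : ∀ ε ∈ Ioc (0:ℝ) 1, ∀ t ∈ Icc (0:ℝ) T, c₁ ≤ b ε t ∧ b ε t ≤ c₂)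
    (V₁ V₂ F₁ F₂ : ℝ → ℝ → ℂ)
    (hV₁ : ∀ ε ∈ Ioc (0:ℝ) 1, ∀ t ∈ Icc (0:ℝ) T,
      HasDerivAt (V₁ ε) (Complex.I * (ν : ℂ) * V₂ ε t + F₁ ε t) t)
    (hV₂ : ∀ ε ∈ Ioc (0:ℝ) 1, ∀ t ∈ Icc (0:ℝ) T,
      HasDerivAt (V₂ ε) (Complex.I * (ν : ℂ) * ((b ε t : ℝ) : ℂ) * V₁ ε t + F₂ ε t) t)
    (hV0 : ∀ ε ∈ Ioc (0:ℝ) 1, V₁ ε 0 = 0 ∧ V₂ ε 0 = 0)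
    (hF : ∀ ℓ : ℕ, ∃ cℓ > 0, ∀ ε ∈ Ioc (0:ℝ) 1, ∀ t ∈ Icc (0:ℝ) T,
      ‖F₁ ε t‖ + ‖F₂ ε t‖ ≤ cℓ * ε ^ ℓ) :
    ∀ ℓ : ℕ, ∃ Cℓ > 0, ∀ ε ∈ Ioc (0:ℝ) 1, ∀ t ∈ Icc (0:ℝ) T,
      ‖V₁ ε t‖ + ‖V₂ ε t‖ ≤ Cℓ * ε ^ ℓ := by
  intro ℓ
  obtain ⟨cℓ, hcℓ, hFℓ⟩ := hF ℓ
  set K := |ν| * c₂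
  have hK : 0 < K := mul_pos (abs_pos.2 hν.ne') (by linarith)
  refine ⟨2 * cℓ * exp (K * T) / K, by positivity, fun ε hε t ht => ?_⟩
  have hV := fun s hs => (hV₁ ε hε s hs).prodMk (hV₂ ε hε s hs)
  have hgrowth : ∀ s ∈ Ico (0:ℝ) T, ‖(Complex.I * ν * V₂ ε s + F₁ ε s,
      Complex.I * ν * (b ε s : ℂ) * V₁ ε s + F₂ ε s)‖
        ≤ K * ‖(V₁ ε s, V₂ ε s)‖ + cℓ * ε ^ ℓ := by
    intro s hs
    have hs' : s ∈ Icc (0:ℝ) T := Ico_subset_Icc_self hs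
    obtain ⟨hcb, hbc⟩ := hbb ε hε s hs'
    have hβ : max 1 |b ε s| ≤ c₂ := max_le h1c₂ (abs_le.2 ⟨by linarith, hbc⟩)
    refine (norm_symmetrizedField_le ν (b ε s) _ _ _ _).trans (add_le_add ?_ ?_)
    · exact mul_le_mul_of_nonneg_right (mul_le_mul_of_nonneg_left hβ (abs_nonneg ν))
        (norm_nonneg _)
    · exact (max_le_add_of_nonneg (norm_nonneg _) (norm_nonneg _)).trans (hFℓ ε hε s hs')
  have hgron :=
    norm_le_of_norm_deriv_le_of_eq_zero hK.ne' hV (by simp [hV0 ε hε]) hgrowth t ht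
  calc ‖V₁ ε t‖ + ‖V₂ ε t‖ ≤ 2 * ‖(V₁ ε t, V₂ ε t)‖ := by
        linarith [norm_fst_le (V₁ ε t, V₂ ε t), norm_snd_le (V₁ ε t, V₂ ε t)]
    _ ≤ 2 * (cℓ * ε ^ ℓ / K * (exp (K * t) - 1)) := by gcongr
    _ ≤ 2 * (cℓ * ε ^ ℓ / K * exp (K * T)) := by
        have := hε.1
        gcongr 2 * (_ * ?_)
        linarith [exp_le_exp.2 (mul_le_mul_of_nonneg_left ht.2 hK.le)]
    _ = 2 * cℓ * exp (K * T) / K * ε ^ ℓ := by ring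

/-- Uniqueness of very weak solutions at the Fourier level: for the symmetrised
hyperbolic system `V_ε' = iν A_ε(t) V_ε + F_ε` (components `V₁' = iν V₂ + F₁`,
`V₂' = iν b_ε V₁ + F₂`, symmetriser `S_ε = diag(b_ε, 1)` with `S_ε A_ε = A_ε* S_ε`),
zero initial data, uniform two-sided bounds `c₁ ≤ b_ε ≤ c₂` (so that
`c₁|V|² ≤ (S_ε V, V) ≤ c₂|V|²`), derivative bound `‖∂_t S_ε‖ = |b_ε'| ≤ c ε^{-N}`, and
negligible forcing `F_ε`, the solution `V_ε` is negligible: for every `ℓ` there is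
`C_ℓ` with `sup_{[0,T]} |V_ε(t)| ≤ C_ℓ ε^ℓ` for all `ε ∈ (0,1]`. -/
theorem very_weak_uniqueness_fourier
    (T c c₁ c₂ ν : ℝ) (N : ℕ) (hT : 0 < T) (hc : 0 < c) (hν : 0 < ν)
    (hc₁ : 0 < c₁) (hc₁1 : c₁ ≤ 1) (h1c₂ : 1 ≤ c₂)
    (b b' : ℝ → ℝ → ℝ)
    (hb : ∀ ε ∈ Ioc (0:ℝ) 1, ∀ t ∈ Icc (0:ℝ) T, HasDerivAt (b ε) (b' ε t) t)
    (hbb : ∀ ε ∈ Ioc (0:ℝ) 1, ∀ t ∈ Icc (0:ℝ) T, c₁ ≤ b ε t ∧ b ε t ≤ c₂)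
    (hb' : ∀ ε ∈ Ioc (0:ℝ) 1, ∀ t ∈ Icc (0:ℝ) T, |b' ε t| ≤ c * ε ^ (-(N : ℝ)))
    (V₁ V₂ F₁ F₂ : ℝ → ℝ → ℂ)
    (hV₁ : ∀ ε ∈ Ioc (0:ℝ) 1, ∀ t ∈ Icc (0:ℝ) T,
      HasDerivAt (V₁ ε) (Complex.I * (ν : ℂ) * V₂ ε t + F₁ ε t) t)
    (hV₂ : ∀ ε ∈ Ioc (0:ℝ) 1, ∀ t ∈ Icc (0:ℝ) T,
      HasDerivAt (V₂ ε) (Complex.I * (ν : ℂ) * ((b ε t : ℝ) : ℂ) * V₁ ε t + F₂ ε t) t)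
    (hV0 : ∀ ε ∈ Ioc (0:ℝ) 1, V₁ ε 0 = 0 ∧ V₂ ε 0 = 0)
    (hF : ∀ ℓ : ℕ, ∃ cℓ > 0, ∀ ε ∈ Ioc (0:ℝ) 1, ∀ t ∈ Icc (0:ℝ) T,
      ‖F₁ ε t‖ + ‖F₂ ε t‖ ≤ cℓ * ε ^ ℓ) :
    ∀ ℓ : ℕ, ∃ Cℓ > 0, ∀ ε ∈ Ioc (0:ℝ) 1, ∀ t ∈ Icc (0:ℝ) T,
      ‖V₁ ε t‖ + ‖V₂ ε t‖ ≤ Cℓ * ε ^ ℓ :=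
  very_weak_uniqueness_fourier_general T c₁ c₂ ν hν hc₁ h1c₂ b hbb V₁ V₂ F₁ F₂ hV₁ hV₂ hV0 hF
end
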